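/- arXiv:math/0603533 — 2 statements merged into one kernel-verified Lean document; each statement's English description precedes it below -/
import Mathlib

section
/- Let S = ℂ^n with standard idempotents e_1,…,e_n and, for i ≠ j, y^{ij} := d_{e_i⊗e_j} ∈ DDer(S), so y^{ij}(a) = (a_j − a_i) e_i⊗e_j. For double derivations θ, η ∈ DDer(S) define the map ⟨⟨θ,η⟩⟩_s : S → S⊗S⊗S by ⟨⟨θ,η⟩⟩_s(a) := τ_{(23)}((θ⊗1)(η(a)) − (1⊗η)(θ(a))) + τ_{(12)}((1⊗θ)(η(a)) − (η⊗1)(θ(a))), where (θ⊗1)(x⊗z) := θ(x)⊗z, (1⊗η)(x⊗z) := x⊗η(z), τ_{(12)}(x⊗y⊗z) := y⊗x⊗z and τ_{(23)}(x⊗y⊗z) := x⊗z⊗y. Then for indices with i ≠ j and k ≠ l: (a) if k = j and i ≠ l, then ⟨⟨y^{ij}, y^{jl}⟩⟩_s(a) = y^{il}(a) ⊗ e_j for all a ∈ S; (b) if l = i and j ≠ k, then ⟨⟨y^{ij}, y^{ki}⟩⟩_s(a) = −e_i ⊗ y^{kj}(a) for all a ∈ S; (c) if {i,j} ∩ {k,l}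 = ∅, or if (k,l) = (j,i), then ⟨⟨y^{ij}, y^{kl}⟩⟩_s = 0. -/
open TensorProduct

set_option synthInstance.maxHeartbeats 1000000
set_option maxHeartbeats 1000000

noncomputable section

/-- The semisimple algebra `S = ℂ ⊕ ⋯ ⊕ ℂ` (`n` copies). -/
abbrev SC (n : ℕ) : Type := Fin n → ℂ

variable (n : ℕ)

/-- `θ` is a double derivation for the outer bimodule structure on `S ⊗ S`. -/
def IsDD (θ : SC n →ₗ[ℂ] SC n ⊗[ℂ] SC n) : Prop :=
  ∀ a b : SC n,
    θ (a * b) = (a ⊗ₜ[ℂ] (1 : SC n)) * θ b + θ a * ((1 : SC n) ⊗ₜ[ℂ] b)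

/-- The space of double derivations `DDer(S)`. -/
def DDer : Submodule ℂ (SC n →ₗ[ℂ] SC n ⊗[ℂ] SC n) where
  carrier := {θ | IsDD n θ}
  add_mem' := by
    intro θ η hθ hη a b
    simp only [LinearMap.add_apply, hθ a b, hη a b, mul_add, add_mul]
    abel
  zero_mem' := by intro a b; simp
  smul_mem' := by
    intro c θ hθ a b
    simp only [LinearMap.smul_apply, hθ a b, smul_add, mul_smul_comm, smul_mul_assoc]

/-- The map `u ↦ (1 ⊗ s) * u * (t ⊗ 1)`, realizing the inner bimodule action
`(s·θ·t)(u) = θ(u)' t ⊗ s θ(u)''` after composition with `θ`. -/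
def innerMap (s t : SC n) : SC n ⊗[ℂ] SC n →ₗ[ℂ] SC n ⊗[ℂ] SC n :=
  (LinearMap.mulRight ℂ (t ⊗ₜ[ℂ] (1 : SC n))).comp
    (LinearMap.mulLeft ℂ ((1 : SC n) ⊗ₜ[ℂ] s))

lemma innerMap_isDD (s t : SC n) (θ : SC n →ₗ[ℂ] SC n ⊗[ℂ] SC n)
    (hθ : IsDD n θ) : IsDD n ((innerMap n s t).comp θ) := by
  intro a b
  have h1 : ((1 : SC n) ⊗ₜ[ℂ] s) * (a ⊗ₜ[ℂ] (1 : SC n))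
      = (a ⊗ₜ[ℂ] (1 : SC n)) * ((1 : SC n) ⊗ₜ[ℂ] s) := by
    simp [Algebra.TensorProduct.tmul_mul_tmul]
  have h2 : ((1 : SC n) ⊗ₜ[ℂ] b) * (t ⊗ₜ[ℂ] (1 : SC n))
      = (t ⊗ₜ[ℂ] (1 : SC n)) * ((1 : SC n) ⊗ₜ[ℂ] b) := by
    simp [Algebra.TensorProduct.tmul_mul_tmul]
  simp only [LinearMap.comp_apply, hθ a b, innerMap, LinearMap.mulLeft_apply,
    LinearMap.mulRight_apply, mul_add, add_mul]
  congr 1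
  · simp only [mul_assoc]
    rw [← mul_assoc, h1, mul_assoc]
  · simp only [mul_assoc]
    rw [h2]

/-- The inner `S`-bimodule action on `DDer(S)`:  `(s·θ·t)(u) = θ(u)' t ⊗ s θ(u)''`. -/
def innerDD (s t : SC n) (θ : DDer n) : DDer n :=
  ⟨(innerMap n s t).comp θ.1, innerMap_isDD n s t θ.1 θ.2⟩

/-- The `i`-th standard orthogonal idempotent `e_i` of `ℂ^n`. -/
def eC (i : Fin n) : SC n := Pi.single i 1

/-- The inner double derivation `d_x(y) = x (1 ⊗ y) - (y ⊗ 1) x`. -/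
def dIn (x : SC n ⊗[ℂ] SC n) : SC n →ₗ[ℂ] SC n ⊗[ℂ] SC n :=
  (LinearMap.mulLeft ℂ x).comp (TensorProduct.mk ℂ (SC n) (SC n) 1)
    - (LinearMap.mulRight ℂ x).comp ((TensorProduct.mk ℂ (SC n) (SC n)).flip 1)

lemma dIn_isDD (x : SC n ⊗[ℂ] SC n) : IsDD n (dIn n x) := by
  intro a b
  simp only [dIn, LinearMap.sub_apply, LinearMap.comp_apply, TensorProduct.mk_apply,
    LinearMap.flip_apply, LinearMap.mulLeft_apply, LinearMap.mulRight_apply, mul_sub, sub_mul]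
  have h1 : ((1 : SC n) ⊗ₜ[ℂ] (a * b)) = ((1 : SC n) ⊗ₜ[ℂ] a) * ((1 : SC n) ⊗ₜ[ℂ] b) := by
    simp [Algebra.TensorProduct.tmul_mul_tmul]
  have h2 : ((a * b) ⊗ₜ[ℂ] (1 : SC n)) = (a ⊗ₜ[ℂ] (1 : SC n)) * (b ⊗ₜ[ℂ] (1 : SC n)) := by
    simp [Algebra.TensorProduct.tmul_mul_tmul]
  have h3 : (a ⊗ₜ[ℂ] (1 : SC n)) * ((1 : SC n) ⊗ₜ[ℂ] b) = a ⊗ₜ[ℂ] b := by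
    simp [Algebra.TensorProduct.tmul_mul_tmul]
  have h4 : ((1 : SC n) ⊗ₜ[ℂ] a) * (b ⊗ₜ[ℂ] (1 : SC n)) = b ⊗ₜ[ℂ] a := by
    simp [Algebra.TensorProduct.tmul_mul_tmul]
  rw [h1, h2]
  simp only [mul_assoc]
  abel


/-- The inner double derivation `y^{ij} = d_{e_i ⊗ e_j}`. -/
def yC (i j : Fin n) : SC n →ₗ[ℂ] SC n ⊗[ℂ] SC n := dIn n (eC n i ⊗ₜ[ℂ] eC n j)

/-- `(θ ⊗ 1)(x ⊗ z) = θ(x) ⊗ z`, viewed in `S ⊗ S ⊗ S`. -/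
def tL (θ : SC n →ₗ[ℂ] SC n ⊗[ℂ] SC n) :
    SC n ⊗[ℂ] SC n →ₗ[ℂ] (SC n ⊗[ℂ] SC n) ⊗[ℂ] SC n :=
  TensorProduct.map θ LinearMap.id

/-- `(1 ⊗ η)(x ⊗ z) = x ⊗ η(z)`, viewed in `S ⊗ S ⊗ S`. -/
def tR (η : SC n →ₗ[ℂ] SC n ⊗[ℂ] SC n) :
    SC n ⊗[ℂ] SC n →ₗ[ℂ] (SC n ⊗[ℂ] SC n) ⊗[ℂ] SC n :=
  (TensorProduct.assoc ℂ (SC n) (SC n) (SC n)).symm.toLinearMap.comp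
    (TensorProduct.map LinearMap.id η)

/-- `τ_{(12)} (x ⊗ y ⊗ z) = y ⊗ x ⊗ z`. -/
def tau12 : (SC n ⊗[ℂ] SC n) ⊗[ℂ] SC n →ₗ[ℂ] (SC n ⊗[ℂ] SC n) ⊗[ℂ] SC n :=
  TensorProduct.map (TensorProduct.comm ℂ (SC n) (SC n)).toLinearMap LinearMap.id

/-- `τ_{(23)} (x ⊗ y ⊗ z) = x ⊗ z ⊗ y`. -/
def tau23 : (SC n ⊗[ℂ] SC n) ⊗[ℂ] SC n →ₗ[ℂ] (SC n ⊗[ℂ] SC n) ⊗[ℂ] SC n :=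
  (TensorProduct.assoc ℂ (SC n) (SC n) (SC n)).symm.toLinearMap.comp
    ((TensorProduct.map LinearMap.id
        (TensorProduct.comm ℂ (SC n) (SC n)).toLinearMap).comp
      (TensorProduct.assoc ℂ (SC n) (SC n) (SC n)).toLinearMap)

/-- The degree-one part `⟨⟨θ,η⟩⟩_s` of the double Schouten–Nijenhuis bracket of two double
derivations:
`⟨⟨θ,η⟩⟩_s(a) = τ₍₂₃₎((θ⊗1)(η a) − (1⊗η)(θ a)) + τ₍₁₂₎((1⊗θ)(η a) − (η⊗1)(θ a))`. -/
def sch (θ η : SC n →ₗ[ℂ] SC n ⊗[ℂ] SC n) :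
    SC n → (SC n ⊗[ℂ] SC n) ⊗[ℂ] SC n := fun a =>
  tau23 n (tL n θ (η a) - tR n η (θ a)) + tau12 n (tR n θ (η a) - tL n η (θ a))

lemma eC_mul_right (i : Fin n) (a : SC n) : eC n i * a = a i • eC n i := by
  funext x
  simp [eC, Pi.single_apply]
  by_cases h : x = i <;> simp [h, mul_comm]

lemma mul_eC_left (i : Fin n) (a : SC n) : a * eC n i = a i • eC n i := by
  rw [mul_comm, eC_mul_right]

lemma yC_apply (i j : Fin n) (a : SC n) :
    yC n i j a = (a j - a i) • (eC n i ⊗ₜ[ℂ] eC n j) := by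
  simp only [yC, dIn, LinearMap.sub_apply, LinearMap.comp_apply, TensorProduct.mk_apply,
    LinearMap.flip_apply, LinearMap.mulLeft_apply, LinearMap.mulRight_apply,
    Algebra.TensorProduct.tmul_mul_tmul, eC_mul_right, mul_eC_left, one_mul, mul_one]
  simp only [TensorProduct.smul_tmul, TensorProduct.tmul_smul]
  module

lemma sch_yC (i j k l : Fin n) (a : SC n) :
    sch n (yC n i j) (yC n k l) a =
      (((a l - a k) * (eC n k j - eC n k i)) • (eC n i ⊗ₜ[ℂ] eC n l) ⊗ₜ[ℂ] eC n j
      - ((a j - a i) * (eC n j l - eC n j k)) • (eC n i ⊗ₜ[ℂ] eC n l) ⊗ₜ[ℂ] eC n k)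
      + (((a l - a k) * (eC n l j - eC n l i)) • (eC n i ⊗ₜ[ℂ] eC n k) ⊗ₜ[ℂ] eC n j
      - ((a j - a i) * (eC n i l - eC n i k)) • (eC n l ⊗ₜ[ℂ] eC n k) ⊗ₜ[ℂ] eC n j) := by
  simp only [sch, yC_apply, tL, tR, tau12, tau23, map_smul, map_sub,
    LinearMap.comp_apply, LinearEquiv.coe_coe, TensorProduct.map_tmul,
    TensorProduct.smul_tmul, TensorProduct.tmul_smul,
    TensorProduct.assoc_tmul, TensorProduct.assoc_symm_tmul,
    TensorProduct.comm_tmul, LinearMap.id_coe, id_eq, smul_smul]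

lemma eC_apply_self (i : Fin n) : eC n i i = 1 := by simp [eC]

lemma eC_apply_ne {i j : Fin n} (h : j ≠ i) : eC n i j = 0 := by
  simp [eC, Pi.single_apply, h]

/-- The double Schouten bracket of the double derivations `y^{ij} = d_{e_i⊗e_j}`
of `ℂ^n`: (a) `⟨⟨y^{ij}, y^{jl}⟩⟩_s(a) = y^{il}(a) ⊗ e_j` for `i ≠ l`;
(b) `⟨⟨y^{ij}, y^{ki}⟩⟩_s(a) = −e_i ⊗ y^{kj}(a)` for `j ≠ k`;
(c) `⟨⟨y^{ij}, y^{kl}⟩⟩_s = 0` when `{i,j} ∩ {k,l} = ∅` or `(k,l) = (j,i)`. -/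
theorem schouten_bracket_on_Cn (n : ℕ) :
    (∀ i j l : Fin n, i ≠ j → j ≠ l → i ≠ l →
      ∀ a : SC n, sch n (yC n i j) (yC n j l) a = (yC n i l a) ⊗ₜ[ℂ] eC n j) ∧
    (∀ i j k : Fin n, i ≠ j → k ≠ i → j ≠ k →
      ∀ a : SC n, sch n (yC n i j) (yC n k i) a =
        - (TensorProduct.assoc ℂ (SC n) (SC n) (SC n)).symm (eC n i ⊗ₜ[ℂ] yC n k j a)) ∧
    (∀ i j k l : Fin n, i ≠ j → k ≠ l →
      ((i ≠ k ∧ i ≠ l ∧ j ≠ k ∧ j ≠ l) ∨ (k = j ∧ l = i)) →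
      ∀ a : SC n, sch n (yC n i j) (yC n k l) a = 0) := by
  refine ⟨?_, ?_, ?_⟩
  · intro i j l hij hjl hil a
    rw [sch_yC, yC_apply]
    simp only [eC_apply_self, eC_apply_ne n hij, eC_apply_ne n hij.symm,
      eC_apply_ne n hjl, eC_apply_ne n hjl.symm, eC_apply_ne n hil, eC_apply_ne n hil.symm]
    simp only [TensorProduct.smul_tmul, TensorProduct.tmul_smul]
    module
  · intro i j k hij hki hjk a
    rw [sch_yC, yC_apply, TensorProduct.tmul_smul, map_smul, TensorProduct.assoc_symm_tmul]
    simp only [eC_apply_self, eC_apply_ne n hij, eC_apply_ne n hij.symm,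
      eC_apply_ne n hki, eC_apply_ne n hki.symm, eC_apply_ne n hjk, eC_apply_ne n hjk.symm,
      TensorProduct.smul_tmul, TensorProduct.tmul_smul]
    module
  · intro i j k l hij hkl hc a
    rw [sch_yC]
    rcases hc with ⟨hik, hil, hjk, hjl⟩ | ⟨hkj, hli⟩
    · simp only [eC_apply_self, eC_apply_ne n hik, eC_apply_ne n hik.symm,
        eC_apply_ne n hil, eC_apply_ne n hil.symm, eC_apply_ne n hjk, eC_apply_ne n hjk.symm,
        eC_apply_ne n hjl, eC_apply_ne n hjl.symm,
        TensorProduct.smul_tmul, TensorProduct.tmul_smul]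
      module
    · subst hkj; subst hli
      simp only [eC_apply_self, eC_apply_ne n hij, eC_apply_ne n hij.symm,
        TensorProduct.smul_tmul, TensorProduct.tmul_smul]
      module

end
end

section
/- Let n ≥ 2 and let c_{ij} ∈ ℂ for 1 ≤ i < j ≤ n satisfy c_{ij} c_{ik} + c_{ik} c_{jk} − c_{ij} c_{jk} = 0 for all i < j < k (so that P = ∑_{i<j} c_{ij} y^{ij} y^{ji} determines a double Poisson bracket on ℂ^n). Then: (1) there exists μ = (μ_1,…,μ_n) ∈ ℂ^n with c_{ij}(μ_i − μ_j) = 1 for all i < j (the moment map equation) if and only if c_{ij} ≠ 0 for all i < j; (2) if all c_{ij} are nonzero, then any two solutions differ by a constant vector (i.e., μ_i − μ′_i is independent of i), and the vector μ with μ_1 = 0 and μ_i = −1/c_{1i} for 2 ≤ i ≤ n is a solution. -/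
/-!
A moment map satisfies `μ i - μ j = (c i j)⁻¹` for `i < j`, which forces `c i j ≠ 0` and fixes `μ`
up to an additive constant. Conversely, normalising `μ` at the least index `i₀`, the equations for
the pairs `i₀ < i < j` become exactly the relations among `c i₀ i`, `c i₀ j`, `c i j`.
-/

/-- The index `1` (i.e. `0` in `Fin n`). -/
def fz (n : ℕ) (hn : 2 ≤ n) : Fin n := ⟨0, by omega⟩

theorem mul_neg_inv_sub_neg_inv_eq_one {K : Type*} [Field K] {a b d : K} (ha : a ≠ 0)
    (hb : b ≠ 0) (h : a * b + b * d - a * d = 0) : d * (-a⁻¹ - -b⁻¹) = 1 := by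
  field_simp
  linear_combination -h

section MomentMap

variable {K ι : Type*} [Field K] [LinearOrder ι]

def IsMomentMap (c : ι → ι → K) (μ : ι → K) : Prop :=
  ∀ i j, i < j → c i j * (μ i - μ j) = 1

variable {c : ι → ι → K} {μ μ' : ι → K}

theorem IsMomentMap.ne_zero (hμ : IsMomentMap c μ) {i j : ι} (hij : i < j) : c i j ≠ 0 :=
  left_ne_zero_of_mul_eq_one (hμ i j hij)

theorem IsMomentMap.sub_eq_inv (hμ : IsMomentMap c μ) {i j : ι} (hij : i < j) :
    μ i - μ j = (c i j)⁻¹ :=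
  eq_inv_of_mul_eq_one_right (hμ i j hij)

theorem IsMomentMap.sub_eq_sub (hμ : IsMomentMap c μ) (hμ' : IsMomentMap c μ') (i j : ι) :
    μ i - μ' i = μ j - μ' j := by
  have key : ∀ {i j : ι}, i < j → μ i - μ' i = μ j - μ' j := fun {i j} hij => by
    linear_combination hμ.sub_eq_inv hij - hμ'.sub_eq_inv hij
  rcases lt_trichotomy i j with hij | rfl | hji
  · exact key hij
  · rfl
  · exact (key hji).symm

theorem isMomentMap_of_isBot {i₀ : ι} (h₀ : IsBot i₀) (hc : ∀ j, i₀ < j → c i₀ j ≠ 0)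
    (hrel : ∀ i j k, i < j → j < k → c i j * c i k + c i k * c j k - c i j * c j k = 0) :
    IsMomentMap c (fun i => if i = i₀ then 0 else -(c i₀ i)⁻¹) := by
  intro i j hij
  have hj : j ≠ i₀ := (lt_of_le_of_lt (h₀ i) hij).ne'
  rcases eq_or_ne i i₀ with rfl | hi
  · simp only [if_pos, if_neg hj, zero_sub, neg_neg]
    exact mul_inv_cancel₀ (hc j hij)
  · have h₀i : i₀ < i := lt_of_le_of_ne (h₀ i) hi.symm
    simp only [if_neg hi, if_neg hj]
    exact mul_neg_inv_sub_neg_inv_eq_one (hc i h₀i) (hc j (h₀i.trans hij))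
      (hrel i₀ i j h₀i hij)

end MomentMap

/-- Let `n ≥ 2` and let `c i j` (`i < j`) satisfy the relations
`c i j * c i k + c i k * c j k − c i j * c j k = 0` for all `i < j < k`, so that
`P = ∑_{i<j} c_{ij} y^{ij} y^{ji}` determines a double Poisson bracket on `ℂ^n`.  Then:
(1) a moment map exists — i.e. there is `μ : ℂ^n` with `c i j * (μ i − μ j) = 1` for all
`i < j` — if and only if all `c i j` (`i < j`) are nonzero; and
(2) if all `c i j` are nonzero then any two solutions differ by a constant, and
`μ = (0, −1/c 0 1, …, −1/c 0 (n-1))` is a solution. -/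
theorem moment_map_exists_iff (n : ℕ) (hn : 2 ≤ n) (c : Fin n → Fin n → ℂ)
    (hrel : ∀ i j k : Fin n, i < j → j < k →
      c i j * c i k + c i k * c j k - c i j * c j k = 0) :
    ((∃ μ : Fin n → ℂ, ∀ i j : Fin n, i < j → c i j * (μ i - μ j) = 1) ↔
      ∀ i j : Fin n, i < j → c i j ≠ 0) ∧
    ((∀ i j : Fin n, i < j → c i j ≠ 0) →
      (∀ μ μ' : Fin n → ℂ,
        (∀ i j : Fin n, i < j → c i j * (μ i - μ j) = 1) →
        (∀ i j : Fin n, i < j → c i j * (μ' i - μ' j) = 1) →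
        ∃ z : ℂ, ∀ i, μ i - μ' i = z) ∧
      (∀ i j : Fin n, i < j →
        c i j * ((if i = fz n hn then 0 else -(c (fz n hn) i)⁻¹) -
          (if j = fz n hn then 0 else -(c (fz n hn) j)⁻¹)) = 1)) := by
  have hbot : IsBot (fz n hn) := fun i => Nat.zero_le i
  have solution (hc : ∀ i j : Fin n, i < j → c i j ≠ 0) :=
    isMomentMap_of_isBot hbot (hc _) hrel
  refine ⟨⟨fun ⟨μ, hμ⟩ _ _ hij => IsMomentMap.ne_zero hμ hij, fun hc => ⟨_, solution hc⟩⟩,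
    fun hc => ⟨fun μ μ' hμ hμ' => ⟨_, fun i => IsMomentMap.sub_eq_sub hμ hμ' i (fz n hn)⟩,
      solution hc⟩⟩
end
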